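/- For any càdlàg functions f, g : [a,b] → ℝ and any c ≥ 0, one has both TV^c(f+g,[a,b]) ≤ TV^c(f,[a,b]) + TV(g,[a,b]) and TV^c(f,[a,b]) ≤ TV^c(f+g,[a,b]) + TV(g,[a,b]) in [0,∞]; in particular, if g has finite total variation and c > 0, then |TV^c(f+g,[a,b]) − TV^c(f,[a,b])| ≤ TV(g,[a,b]). -/

import Mathlib

open MeasureTheory ProbabilityTheory Filter Set
open scoped ENNReal NNReal Topology

noncomputable section

/-- Truncated variation of `f` on `[a,b]` with threshold `c`:
`sup` over finite nondecreasing sequences in `[a,b]` of `∑ max(|f(t_{i+1}) - f(t_i)| - c, 0)`. -/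
def TV (f : ℝ → ℝ) (a b c : ℝ) : ℝ≥0∞ :=
  ⨆ (n : ℕ) (t : Fin (n + 1) → ℝ) (_ : Monotone t) (_ : ∀ i, t i ∈ Set.Icc a b),
    ∑ i : Fin n, ENNReal.ofReal (|f (t i.succ) - f (t i.castSucc)| - c)

/-- Upward truncated variation of `f` on `[a,b]` with threshold `c`:
`sup` over interleaved sequences `a ≤ t_1 ≤ s_1 ≤ t_2 ≤ … ≤ s_n ≤ b` of
`∑ max(f(s_i) - f(t_i) - c, 0)`. -/
def UTV (f : ℝ → ℝ) (a b c : ℝ) : ℝ≥0∞ :=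
  ⨆ (n : ℕ) (t : Fin n → ℝ) (s : Fin n → ℝ)
    (_ : ∀ i, a ≤ t i ∧ t i ≤ s i ∧ s i ≤ b)
    (_ : ∀ i j, i < j → s i ≤ t j),
    ∑ i : Fin n, ENNReal.ofReal (f (s i) - f (t i) - c)

/-- Downward truncated variation of `f` on `[a,b]` with threshold `c`. -/
def DTV (f : ℝ → ℝ) (a b c : ℝ) : ℝ≥0∞ := UTV (fun x => - f x) a b c

/-- A standard one-dimensional Brownian motion started at `0`, under the measure `P`:
measurable in `ω`, continuous paths, `W 0 = 0`, Gaussian increments with variance `t - s`,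
and independent increments. -/
structure IsBrownian {Ω : Type*} [MeasurableSpace Ω] (P : Measure Ω) (W : ℝ → Ω → ℝ) :
    Prop where
  meas : ∀ t, Measurable (W t)
  init : ∀ ω, W 0 ω = 0
  cont : ∀ ω, Continuous fun t => W t ω
  gauss : ∀ s t : ℝ, 0 ≤ s → s ≤ t →
    Measure.map (fun ω => W t ω - W s ω) P = gaussianReal 0 (Real.toNNReal (t - s))
  indep : ∀ (n : ℕ) (τ : Fin (n + 1) → ℝ), Monotone τ → (∀ i, 0 ≤ τ i) →
    iIndepFun
      (fun (i : Fin n) ω => W (τ i.succ) ω - W (τ i.castSucc) ω) P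

/-- A càdlàg function on `[a,b]`: right-continuous on `[a,b)` and with left limits on `(a,b]`. -/
def Cadlag (f : ℝ → ℝ) (a b : ℝ) : Prop :=
  (∀ x ∈ Set.Ico a b, ContinuousWithinAt f (Set.Ici x) x) ∧
  (∀ x ∈ Set.Ioc a b, ∃ L : ℝ, Tendsto f (𝓝[<] x) (𝓝 L))

/-!
Since `x ↦ (x - c)⁺` is monotone and `(x + y - c)⁺ ≤ (x - c)⁺ + y` for `y ≥ 0`, the triangle
inequality gives, increment by increment,
`(|Δ(f+g)| - c)⁺ ≤ (|Δf| - c)⁺ + |Δg|` and `(|Δf| - c)⁺ ≤ (|Δ(f+g)| - c)⁺ + |Δg|`,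
so summing over a partition and taking suprema gives both inequalities in `[0, ∞]`.
When `TV(g) < ∞` the two inequalities force `TV^c(f+g)` and `TV^c(f)` to be finite or
infinite together, which yields the bound on the difference of the real values.
-/

theorem sum_le_TV (f : ℝ → ℝ) {a b c : ℝ} {n : ℕ} {t : Fin (n + 1) → ℝ} (ht : Monotone t)
    (hta : ∀ i, t i ∈ Icc a b) :
    ∑ i : Fin n, ENNReal.ofReal (|f (t i.succ) - f (t i.castSucc)| - c) ≤ TV f a b c :=
  le_iSup_of_le n <| le_iSup_of_le t <| le_iSup_of_le ht <| le_iSup_of_le hta le_rfl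

theorem TV_le_TV_add_TV_zero_of_abs_sub_le {f g h : ℝ → ℝ}
    (hfgh : ∀ x y, |f y - f x| ≤ |g y - g x| + |h y - h x|) (a b c : ℝ) :
    TV f a b c ≤ TV g a b c + TV h a b 0 := by
  refine iSup_le fun n => iSup_le fun t => iSup_le fun ht => iSup_le fun hta => ?_
  calc ∑ i : Fin n, ENNReal.ofReal (|f (t i.succ) - f (t i.castSucc)| - c)
      ≤ ∑ i : Fin n, (ENNReal.ofReal (|g (t i.succ) - g (t i.castSucc)| - c)
          + ENNReal.ofReal (|h (t i.succ) - h (t i.castSucc)| - 0)) := by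
        gcongr with i
        refine (ENNReal.ofReal_le_ofReal ?_).trans ENNReal.ofReal_add_le
        linarith [hfgh (t i.castSucc) (t i.succ)]
    _ ≤ TV g a b c + TV h a b 0 := by
        rw [Finset.sum_add_distrib]
        exact add_le_add (sum_le_TV g ht hta) (sum_le_TV h ht hta)

theorem TV_add_le (f g : ℝ → ℝ) (a b c : ℝ) :
    TV (fun x => f x + g x) a b c ≤ TV f a b c + TV g a b 0 :=
  TV_le_TV_add_TV_zero_of_abs_sub_le (fun x y => by
    rw [add_sub_add_comm]
    exact abs_add_le _ _) a b c

theorem TV_le_TV_add_add (f g : ℝ → ℝ) (a b c : ℝ) :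
    TV f a b c ≤ TV (fun x => f x + g x) a b c + TV g a b 0 :=
  TV_le_TV_add_TV_zero_of_abs_sub_le (fun x y => by
    rw [show f y - f x = (f y + g y - (f x + g x)) - (g y - g x) by ring]
    exact abs_sub _ _) a b c

theorem ENNReal.abs_toReal_sub_toReal_le {x y z : ℝ≥0∞} (hxy : x ≤ y + z) (hyx : y ≤ x + z)
    (hz : z ≠ ∞) : |x.toReal - y.toReal| ≤ z.toReal := by
  by_cases hy : y = ∞
  · have hx : x = ∞ := by
      by_contra hx
      exact ENNReal.add_ne_top.mpr ⟨hx, hz⟩ (top_le_iff.mp (hy ▸ hyx))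
    simp [hx, hy]
  have hx : x ≠ ∞ := ne_top_of_le_ne_top (ENNReal.add_ne_top.mpr ⟨hy, hz⟩) hxy
  have hxy' : x.toReal ≤ y.toReal + z.toReal :=
    ENNReal.toReal_add hy hz ▸ ENNReal.toReal_mono (ENNReal.add_ne_top.mpr ⟨hy, hz⟩) hxy
  have hyx' : y.toReal ≤ x.toReal + z.toReal :=
    ENNReal.toReal_add hx hz ▸ ENNReal.toReal_mono (ENNReal.add_ne_top.mpr ⟨hx, hz⟩) hyx
  rw [abs_sub_le_iff]
  constructor <;> linarith

theorem truncated_variation_lipschitz_in_total_variation_general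
    (a b : ℝ) (f g : ℝ → ℝ)
    (c : ℝ) :
    TV (fun x => f x + g x) a b c ≤ TV f a b c + TV g a b 0 ∧
    TV f a b c ≤ TV (fun x => f x + g x) a b c + TV g a b 0 ∧
    (TV g a b 0 ≠ ∞ → 0 < c →
      |(TV (fun x => f x + g x) a b c).toReal - (TV f a b c).toReal|
        ≤ (TV g a b 0).toReal) :=
  ⟨TV_add_le f g a b c, TV_le_TV_add_add f g a b c, fun hg _ =>
    ENNReal.abs_toReal_sub_toReal_le (TV_add_le f g a b c) (TV_le_TV_add_add f g a b c) hg⟩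

/-- For càdlàg `f, g` on `[a,b]` and `c ≥ 0`:
`TV^c(f+g) ≤ TV^c(f) + TV(g)` and `TV^c(f) ≤ TV^c(f+g) + TV(g)` in `[0,∞]`; in particular,
if `g` has finite total variation and `c > 0`, then `|TV^c(f+g) − TV^c(f)| ≤ TV(g)`. -/
theorem truncated_variation_lipschitz_in_total_variation
    (a b : ℝ) (hab : a ≤ b) (f g : ℝ → ℝ)
    (hf : Cadlag f a b) (hg : Cadlag g a b)
    (c : ℝ) (hc : 0 ≤ c) :
    TV (fun x => f x + g x) a b c ≤ TV f a b c + TV g a b 0 ∧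
    TV f a b c ≤ TV (fun x => f x + g x) a b c + TV g a b 0 ∧
    (TV g a b 0 ≠ ∞ → 0 < c →
      |(TV (fun x => f x + g x) a b c).toReal - (TV f a b c).toReal|
        ≤ (TV g a b 0).toReal) :=
  truncated_variation_lipschitz_in_total_variation_general a b f g c
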